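/- Under Assumption A1, suppose β_f ∈ ℝ^d satisfies β_f^⊤ B_{il} ≥ 1 for all i ∈ [n] and l ≠ opt(i). Then for every β ∈ ℝ^d, ⟨∇_β L(β), β_f⟩ ≤ (1/n) Σ_{i=1}^n Σ_{l≠opt(i)} exp(−γ_i^⊤ S(g_i(β))) (Σ(g_i(β)) γ_i)_l < 0. In particular, ∇_β L(β) ≠ 0 for every β ∈ ℝ^d. -/

import Mathlib

open Real Filter Finset

noncomputable section

namespace AttnGF

/-- Softmax of a vector in `ℝ^L`. -/
def S {L : ℕ} (u : Fin L → ℝ) (l : Fin L) : ℝ := Real.exp (u l) / ∑ j, Real.exp (u j)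

/-- Euclidean norm of a vector. -/
def l2 {d : ℕ} (x : Fin d → ℝ) : ℝ := Real.sqrt (∑ j, x j ^ 2)

/-- ℓ1 norm of a vector. -/
def l1 {d : ℕ} (x : Fin d → ℝ) : ℝ := ∑ j, |x j|

variable {n L d de : ℕ}

/-- Token scores γ_{il} = y_i v^⊤ x_{il}. -/
def gam (X : Fin n → Fin L → Fin d → ℝ) (y : Fin n → ℝ) (v : Fin d → ℝ)
    (i : Fin n) (l : Fin L) : ℝ := y i * ∑ j, v j * X i l j

/-- g_i(β) = X_i (β ⊙ z_i) for the diagonal attention model. -/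
def gD (X : Fin n → Fin L → Fin d → ℝ) (z : Fin n → Fin d → ℝ) (i : Fin n)
    (β : Fin d → ℝ) (l : Fin L) : ℝ := ∑ j, X i l j * (β j * z i j)

/-- Empirical exponential loss for the diagonal attention model. -/
def lossD (X : Fin n → Fin L → Fin d → ℝ) (z : Fin n → Fin d → ℝ)
    (y : Fin n → ℝ) (v : Fin d → ℝ) (β : Fin d → ℝ) : ℝ :=
  (1 / (n : ℝ)) * ∑ i, Real.exp (-(∑ l, gam X y v i l * S (gD X z i β) l))

/-- Constraint vectors B_{il} = z_i ⊙ (x_{i,opt(i)} − x_{il}). -/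
def Bv (X : Fin n → Fin L → Fin d → ℝ) (z : Fin n → Fin d → ℝ)
    (opt : Fin n → Fin L) (i : Fin n) (l : Fin L) (j : Fin d) : ℝ :=
  z i j * (X i (opt i) j - X i l j)

/-- (Σ(u) γ)_l where Σ(u) = Diag(S(u)) − S(u) S(u)^⊤. -/
def SigMul {L : ℕ} (u γv : Fin L → ℝ) (l : Fin L) : ℝ :=
  S u l * γv l - S u l * ∑ j, S u j * γv j

/-- j-th component of the gradient (partial derivative) of f at x. -/
def pD {d : ℕ} (f : (Fin d → ℝ) → ℝ) (x : Fin d → ℝ) (j : Fin d) : ℝ :=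
  fderiv ℝ f x (Pi.single j 1)

/-- Assumption A1. -/
def A1 (X : Fin n → Fin L → Fin d → ℝ) (y : Fin n → ℝ) (v : Fin d → ℝ)
    (opt : Fin n → Fin L) (nopt : Fin n → ℝ) : Prop :=
  ∀ i : Fin n, ∀ l : Fin L, l ≠ opt i →
    gam X y v i l < gam X y v i (opt i) ∧ gam X y v i l = nopt i

/-- Feasibility for the ℓ1-SVM. -/
def Feas (X : Fin n → Fin L → Fin d → ℝ) (z : Fin n → Fin d → ℝ)
    (opt : Fin n → Fin L) (βf : Fin d → ℝ) : Prop :=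
  ∀ i : Fin n, ∀ l : Fin L, l ≠ opt i → 1 ≤ ∑ j, βf j * Bv X z opt i l j

/-- Reparametrized gradient flow on (w₊, w₋). -/
def Flow (X : Fin n → Fin L → Fin d → ℝ) (z : Fin n → Fin d → ℝ)
    (y : Fin n → ℝ) (v : Fin d → ℝ) (wp wm : ℝ → Fin d → ℝ) : Prop :=
  ∀ t : ℝ, 0 ≤ t → ∀ j : Fin d,
    HasDerivAt (fun s => wp s j)
      (-(pD (fun u => lossD X z y v (fun k => (u k ^ 2 - wm t k ^ 2) / 2)) (wp t) j)) t ∧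
    HasDerivAt (fun s => wm s j)
      (-(pD (fun u => lossD X z y v (fun k => (wp t k ^ 2 - u k ^ 2) / 2)) (wm t) j)) t

/-- β(t) = (w₊(t)^{⊙2} − w₋(t)^{⊙2})/2. -/
def bCurve (wp wm : ℝ → Fin d → ℝ) (t : ℝ) (j : Fin d) : ℝ :=
  (wp t j ^ 2 - wm t j ^ 2) / 2

/-- Assumption A2 (initial loss bound). -/
def A2 (X : Fin n → Fin L → Fin d → ℝ) (z : Fin n → Fin d → ℝ)
    (y : Fin n → ℝ) (v : Fin d → ℝ) (opt : Fin n → Fin L) (nopt : Fin n → ℝ)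
    (β0 : Fin d → ℝ) : Prop :=
  ∀ jj : Fin n, lossD X z y v β0 ≤
    (Real.exp (-(nopt jj)) +
      ∑ i ∈ Finset.univ.erase jj, Real.exp (-(gam X y v i (opt i)))) / (n : ℝ)

/-- Margin μ(β) = min_{i, l ≠ opt(i)} β^⊤ B_{il}. -/
def margin (X : Fin n → Fin L → Fin d → ℝ) (z : Fin n → Fin d → ℝ)
    (opt : Fin n → Fin L) (β : Fin d → ℝ) : ℝ :=
  sInf {m : ℝ | ∃ i : Fin n, ∃ l : Fin L, l ≠ opt i ∧ m = ∑ j, β j * Bv X z opt i l j}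

/-- φ_{il}(t). -/
def phi (X : Fin n → Fin L → Fin d → ℝ) (z : Fin n → Fin d → ℝ)
    (y : Fin n → ℝ) (v : Fin d → ℝ) (β : ℝ → Fin d → ℝ) (i : Fin n) (l : Fin L)
    (t : ℝ) : ℝ :=
  -(2 / (n : ℝ)) * ∫ τ in (0:ℝ)..t,
    Real.exp (-(∑ l', gam X y v i l' * S (gD X z i (β τ)) l')) *
      SigMul (gD X z i (β τ)) (gam X y v i) l

/-- Dual variables λ_{il}(t) = φ_{il}(t) / ln μ(β(t)). -/
def lam (X : Fin n → Fin L → Fin d → ℝ) (z : Fin n → Fin d → ℝ)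
    (y : Fin n → ℝ) (v : Fin d → ℝ) (opt : Fin n → Fin L) (β : ℝ → Fin d → ℝ)
    (i : Fin n) (l : Fin L) (t : ℝ) : ℝ :=
  (1 / Real.log (margin X z opt (β t))) * phi X z y v β i l t

/-- g_i(K,Q) = X_i K Q^⊤ z_i for the full attention model. -/
def gM (X : Fin n → Fin L → Fin d → ℝ) (z : Fin n → Fin d → ℝ) (i : Fin n)
    (K Q : Fin d → Fin de → ℝ) (l : Fin L) : ℝ :=
  ∑ a, ∑ b, ∑ c, X i l a * K a b * Q c b * z i c

/-- Empirical exponential loss for the full attention model. -/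
def lossM (X : Fin n → Fin L → Fin d → ℝ) (z : Fin n → Fin d → ℝ)
    (y : Fin n → ℝ) (v : Fin d → ℝ) (K Q : Fin d → Fin de → ℝ) : ℝ :=
  (1 / (n : ℝ)) * ∑ i, Real.exp (-(∑ l, gam X y v i l * S (gM X z i K Q) l))

/-- Partial derivative of f with respect to the (a,b) entry of a matrix. -/
def pDM {d de : ℕ} (f : (Fin d → Fin de → ℝ) → ℝ) (M : Fin d → Fin de → ℝ)
    (a : Fin d) (b : Fin de) : ℝ :=
  fderiv ℝ f M (Pi.single a (Pi.single b 1))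

/-- Gradient flow on the key and query matrices. -/
def MFlow (X : Fin n → Fin L → Fin d → ℝ) (z : Fin n → Fin d → ℝ)
    (y : Fin n → ℝ) (v : Fin d → ℝ) (K Q : ℝ → Fin d → Fin de → ℝ) : Prop :=
  ∀ t : ℝ, 0 ≤ t → ∀ (a : Fin d) (b : Fin de),
    HasDerivAt (fun s => K s a b) (-(pDM (fun M => lossM X z y v M (Q t)) (K t) a b)) t ∧
    HasDerivAt (fun s => Q s a b) (-(pDM (fun M => lossM X z y v (K t) M) (Q t) a b)) t

/-- A rectangular matrix is diagonal: zero off the main diagonal. -/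
def RectDiag {d de : ℕ} (M : Fin d → Fin de → ℝ) : Prop :=
  ∀ (a : Fin d) (b : Fin de), (a : ℕ) ≠ (b : ℕ) → M a b = 0

/-- Orthogonality: U^⊤ U = 1. -/
def Orth {d : ℕ} (U : Fin d → Fin d → ℝ) : Prop :=
  ∀ j j' : Fin d, ∑ a, U a j * U a j' = (if j = j' then (1:ℝ) else 0)

/-- Assumption B1, with the pairing of non-optimal tokens given by the involution σ. -/
def B1 (X : Fin n → Fin L → Fin d → ℝ) (z : Fin n → Fin d → ℝ)
    (opt : Fin n → Fin L) (σ : Fin n → Fin L → Fin L) : Prop :=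
  (∀ i j : Fin n, i ≠ j →
    (∑ a, X i (opt i) a * X j (opt j) a = 0) ∧ (∑ a, z i a * z j a = 0)) ∧
  (∀ i, |∑ a, X i (opt i) a * z i a| = l2 (X i (opt i)) * l2 (z i)) ∧
  (∀ i, ∀ l, l ≠ opt i → σ i l ≠ opt i ∧ σ i l ≠ l ∧ σ i (σ i l) = l ∧
    ∃ c : ℝ, -1 ≤ c ∧ c < 1 ∧
      (∑ a, X i (opt i) a * (X i l a - X i (σ i l) a)) = 0 ∧
      (∀ a, X i l a + X i (σ i l) a = 2 * c * X i (opt i) a))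

/-- Rotated constraint vectors B̃_{il}. -/
def Btil (X : Fin n → Fin L → Fin d → ℝ) (z : Fin n → Fin d → ℝ)
    (opt : Fin n → Fin L) (pim : Fin n → Fin d) (i : Fin n) (l : Fin L) (j : Fin d) : ℝ :=
  Real.sign (∑ a, X i (opt i) a * z i a) * (∑ a, (X i (opt i) a - X i l a) * z i a) *
    (if j = pim i then 1 else 0)

/-- Margin with respect to the rotated constraints. -/
def marginB (X : Fin n → Fin L → Fin d → ℝ) (z : Fin n → Fin d → ℝ)
    (opt : Fin n → Fin L) (pim : Fin n → Fin d) (β : Fin d → ℝ) : ℝ :=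
  sInf {m : ℝ | ∃ i : Fin n, ∃ l : Fin L, l ≠ opt i ∧ m = ∑ j, β j * Btil X z opt pim i l j}

/-- Margin for a combined attention weight matrix. -/
def marginM (X : Fin n → Fin L → Fin d → ℝ) (z : Fin n → Fin d → ℝ)
    (opt : Fin n → Fin L) (W : Fin d → Fin d → ℝ) : ℝ :=
  sInf {m : ℝ | ∃ i : Fin n, ∃ l : Fin L, l ≠ opt i ∧
    m = ∑ a, ∑ c, (X i (opt i) a - X i l a) * W a c * z i c}

/-- The former `Matrix.PosSemidef.sqrt` (removed from Mathlib), with its old definition. -/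
def psdSqrt {d : ℕ} {A : Matrix (Fin d) (Fin d) ℝ} (hA : A.PosSemidef) :
    Matrix (Fin d) (Fin d) ℝ :=
  (hA.1.eigenvectorUnitary : Matrix (Fin d) (Fin d) ℝ) *
    Matrix.diagonal (Real.sqrt ∘ hA.1.eigenvalues) *
    (star hA.1.eigenvectorUnitary : Matrix (Fin d) (Fin d) ℝ)

/-- Nuclear norm ‖W‖_* = trace((W^⊤W)^{1/2}). -/
def nuclear {d : ℕ} (W : Matrix (Fin d) (Fin d) ℝ) : ℝ :=
  (psdSqrt (Matrix.posSemidef_conjTranspose_mul_self W)).trace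

end AttnGF

/-! Because the entries of Σ(u)γ sum to zero, the derivative of the loss along βf is a
sum over the non-optimal tokens of exp(−γ_iᵀS(g_i)) (Σ(g_i)γ_i)_l βfᵀB_{il}. Under A1 every
such entry (Σ(g_i)γ_i)_l is negative (token l has a score below the softmax average), so the
feasibility bound βfᵀB_{il} ≥ 1 can only push each term further down. -/

namespace AttnGF

section Softmax

variable {L : ℕ} [NeZero L]

lemma sum_exp_pos (u : Fin L → ℝ) : 0 < ∑ l, Real.exp (u l) :=
  Finset.sum_pos (fun _ _ => Real.exp_pos _) Finset.univ_nonempty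

lemma S_pos (u : Fin L → ℝ) (l : Fin L) : 0 < S u l :=
  div_pos (Real.exp_pos _) (sum_exp_pos u)

lemma sum_S (u : Fin L → ℝ) : ∑ l, S u l = 1 := by
  simp only [S, ← Finset.sum_div, div_self (sum_exp_pos u).ne']

lemma sum_SigMul (u γ : Fin L → ℝ) : ∑ l, SigMul u γ l = 0 := by
  simp only [SigMul, Finset.sum_sub_distrib, ← Finset.sum_mul, sum_S, one_mul, sub_self]

lemma hasFDerivAt_sum_mul_S (γ u : Fin L → ℝ) :
    HasFDerivAt (fun w => ∑ l, γ l * S w l)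
      (∑ l, SigMul u γ l • ContinuousLinearMap.proj l : (Fin L → ℝ) →L[ℝ] ℝ) u := by
  have hexp (l : Fin L) : HasFDerivAt (fun w : Fin L → ℝ => Real.exp (w l))
      (Real.exp (u l) • ContinuousLinearMap.proj l) u :=
    (hasFDerivAt_apply l u).exp
  have hnum := HasFDerivAt.fun_sum (u := Finset.univ) fun l _ => (hexp l).const_mul (γ l)
  have hden := (hasDerivAt_inv (sum_exp_pos u).ne').comp_hasFDerivAt u
    (HasFDerivAt.fun_sum (u := Finset.univ) fun l _ => hexp l)
  have hS : (fun w => ∑ l, γ l * S w l) =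
      fun w => (∑ l, γ l * Real.exp (w l)) * (∑ l, Real.exp (w l))⁻¹ := by
    funext w
    simp only [S, Finset.sum_mul, div_eq_mul_inv, mul_assoc]
  rw [hS]
  refine (hnum.mul hden).congr_fderiv ?_
  ext h
  have hD := (sum_exp_pos u).ne'
  simp only [neg_smul, smul_neg, Function.comp_apply, add_apply, neg_apply, smul_apply,
    _root_.sum_apply, ContinuousLinearMap.proj_apply, smul_eq_mul, Finset.mul_sum,
    Finset.sum_mul, SigMul, S]
  rw [← Finset.sum_neg_distrib, ← Finset.sum_add_distrib]
  refine Finset.sum_congr rfl fun l _ => ?_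
  rw [← Finset.sum_mul, ← Finset.mul_sum]
  simp only [div_mul_eq_mul_div, ← Finset.sum_div, mul_comm (γ _)]
  field_simp
  ring

lemma SigMul_neg {γ : Fin L → ℝ} {l₀ : Fin L} {c : ℝ} (hγ : ∀ l, l ≠ l₀ → γ l < γ l₀ ∧ γ l = c)
    (u : Fin L → ℝ) {l : Fin L} (hl : l ≠ l₀) : SigMul u γ l < 0 := by
  have hmean : ∑ m, S u m * γ m = c + S u l₀ * (γ l₀ - c) := by
    have hdev : ∑ m, S u m * (γ m - c) = S u l₀ * (γ l₀ - c) := by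
      refine Finset.sum_eq_single l₀ (fun m _ hm => ?_) (by simp)
      rw [(hγ m hm).2, sub_self, mul_zero]
    simp only [mul_sub, Finset.sum_sub_distrib, ← Finset.sum_mul, sum_S, one_mul] at hdev
    linarith
  have hgap : 0 < S u l₀ * (γ l₀ - c) := mul_pos (S_pos u l₀) (by linarith [hγ l hl])
  have hSig : SigMul u γ l = S u l * (γ l - ∑ m, S u m * γ m) := by rw [SigMul]; ring
  rw [hSig, hmean, (hγ l hl).2]
  nlinarith [S_pos u l]

lemma neg_sum_SigMul_mul_le {γ : Fin L → ℝ} {l₀ : Fin L} {c : ℝ}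
    (hγ : ∀ l, l ≠ l₀ → γ l < γ l₀ ∧ γ l = c) (u a : Fin L → ℝ)
    (ha : ∀ l, l ≠ l₀ → 1 ≤ a l₀ - a l) :
    -∑ l, SigMul u γ l * a l ≤ ∑ l ∈ Finset.univ.erase l₀, SigMul u γ l := by
  have hshift : -∑ l, SigMul u γ l * a l = ∑ l, SigMul u γ l * (a l₀ - a l) := by
    simp only [mul_sub, Finset.sum_sub_distrib, ← Finset.sum_mul, sum_SigMul, zero_mul,
      zero_sub]
  rw [hshift, ← Finset.sum_erase Finset.univ (a := l₀) (by rw [sub_self, mul_zero])]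
  refine Finset.sum_le_sum fun l hl => ?_
  have hl := Finset.ne_of_mem_erase hl
  nlinarith [SigMul_neg hγ u hl, ha l hl]

end Softmax

lemma sum_pD_mul {d : ℕ} (f : (Fin d → ℝ) → ℝ) (x w : Fin d → ℝ) :
    ∑ j, pD f x j * w j = fderiv ℝ f x w := by
  conv_rhs => rw [← Finset.univ_sum_single w, map_sum]
  refine Finset.sum_congr rfl fun j _ => ?_
  rw [pD, mul_comm, ← smul_eq_mul, ← map_smul, ← Pi.single_smul, smul_eq_mul, mul_one]

variable {n L d : ℕ}

def gDCLM (X : Fin n → Fin L → Fin d → ℝ) (z : Fin n → Fin d → ℝ) (i : Fin n) :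
    (Fin d → ℝ) →L[ℝ] (Fin L → ℝ) :=
  LinearMap.toContinuousLinearMap
    { toFun := gD X z i
      map_add' := fun β β' => by
        funext l
        simp only [gD, Pi.add_apply, ← Finset.sum_add_distrib]
        exact Finset.sum_congr rfl fun j _ => by ring
      map_smul' := fun c β => by
        funext l
        simp only [gD, Pi.smul_apply, smul_eq_mul, RingHom.id_apply, Finset.mul_sum]
        exact Finset.sum_congr rfl fun j _ => by ring }

lemma fderiv_lossD_apply [NeZero L] (X : Fin n → Fin L → Fin d → ℝ) (z : Fin n → Fin d → ℝ)
    (y : Fin n → ℝ) (v β h : Fin d → ℝ) :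
    fderiv ℝ (lossD X z y v) β h =
      (1 / (n : ℝ)) * ∑ i, Real.exp (-(∑ l, gam X y v i l * S (gD X z i β) l)) *
        -∑ l, SigMul (gD X z i β) (gam X y v i) l * gD X z i h l := by
  have hterm (i : Fin n) :=
    ((hasFDerivAt_sum_mul_S (gam X y v i) (gD X z i β)).comp β
      (gDCLM X z i).hasFDerivAt).neg.exp
  have hloss : HasFDerivAt (lossD X z y v) _ β :=
    (HasFDerivAt.fun_sum (u := Finset.univ) fun i _ => hterm i).const_mul (1 / (n : ℝ))
  rw [hloss.fderiv]
  simp [gDCLM]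

lemma gD_opt_sub_gD (X : Fin n → Fin L → Fin d → ℝ) (z : Fin n → Fin d → ℝ)
    (opt : Fin n → Fin L) (i : Fin n) (l : Fin L) (β : Fin d → ℝ) :
    gD X z i β (opt i) - gD X z i β l = ∑ j, β j * Bv X z opt i l j := by
  simp only [gD, Bv, ← Finset.sum_sub_distrib]
  exact Finset.sum_congr rfl fun j _ => by ring

/-- correlation of the gradient with a feasible direction is negative;
hence the gradient never vanishes. -/
theorem statement9 {n L d : ℕ} (hn : 0 < n) (hL : 2 ≤ L)
    (X : Fin n → Fin L → Fin d → ℝ) (z : Fin n → Fin d → ℝ)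
    (y : Fin n → ℝ) (v : Fin d → ℝ)
    (opt : Fin n → Fin L) (nopt : Fin n → ℝ)
    (hA1 : A1 X y v opt nopt)
    (βf : Fin d → ℝ) (hfeas : Feas X z opt βf) :
    ∀ β : Fin d → ℝ,
      ((∑ j, pD (lossD X z y v) β j * βf j) ≤
        (1 / (n : ℝ)) * ∑ i : Fin n, ∑ l ∈ Finset.univ.erase (opt i),
          Real.exp (-(∑ l', gam X y v i l' * S (gD X z i β) l')) *
            SigMul (gD X z i β) (gam X y v i) l) ∧
      ((1 / (n : ℝ)) * ∑ i : Fin n, ∑ l ∈ Finset.univ.erase (opt i),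
          Real.exp (-(∑ l', gam X y v i l' * S (gD X z i β) l')) *
            SigMul (gD X z i β) (gam X y v i) l < 0) ∧
      (fun j => pD (lossD X z y v) β j) ≠ 0 := by
  intro β
  have : NeZero L := ⟨by omega⟩
  set R := (1 / (n : ℝ)) * ∑ i : Fin n, ∑ l ∈ Finset.univ.erase (opt i),
    Real.exp (-(∑ l', gam X y v i l' * S (gD X z i β) l')) *
      SigMul (gD X z i β) (gam X y v i) l with hR
  have hbound : ∑ j, pD (lossD X z y v) β j * βf j ≤ R := by
    rw [hR, sum_pD_mul, fderiv_lossD_apply]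
    gcongr with i
    rw [← Finset.mul_sum]
    gcongr
    refine neg_sum_SigMul_mul_le (hA1 i) _ _ fun l hl => ?_
    rw [gD_opt_sub_gD]
    exact hfeas i l hl
  have hneg : R < 0 := by
    have : Nonempty (Fin n) := ⟨⟨0, hn⟩⟩
    have : Nontrivial (Fin L) := Fin.nontrivial_iff_two_le.mpr hL
    rw [hR]
    refine mul_neg_of_pos_of_neg (by positivity) (Finset.sum_neg (fun i _ => ?_) univ_nonempty)
    refine Finset.sum_neg (fun l hl => ?_) univ_nontrivial.erase_nonempty
    exact mul_neg_of_pos_of_neg (exp_pos _) (SigMul_neg (hA1 i) _ (Finset.ne_of_mem_erase hl))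
  refine ⟨hbound, hneg, fun hzero => ?_⟩
  have hcorr : ∑ j, pD (lossD X z y v) β j * βf j = 0 :=
    Finset.sum_eq_zero fun j _ => by rw [congrFun hzero j, Pi.zero_apply, zero_mul]
  linarith

end AttnGF
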